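/- arXiv:2405.17109 — 2 statements merged into one kernel-verified Lean document; each statement's English description precedes it below -/
import Mathlib

section
/- Let A be a set with binary relations → and an equivalence relation ∼ on A, and let ⇀ be a relation with → ⊆ ⇀ ⊆ (∼ · → · ∼). If ⇀ is Church–Rosser modulo ∼ (i.e., the symmetric-reflexive-transitive closure of ⇀ ∪ ∼ is contained in ⇀* · ∼ · ⇀*⁻¹), then the relation →/∼ := ∼ · → · ∼ is Church–Rosser modulo ∼. -/
/-- Normal forms of a binary relation. -/
def NF {A : Type} (r : A → A → Prop) (a : A) : Prop := ∀ b, ¬ r a b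

/-- Conversion modulo an equivalence `sim`: sequences of `step`, `step⁻¹`
and `sim` steps. -/
def Conv {A : Type} (step sim : A → A → Prop) : A → A → Prop :=
  Relation.ReflTransGen (fun a b => step a b ∨ step b a ∨ sim a b)

/-- A valley modulo `sim`: `step* · sim · (step⁻¹)*`. -/
def ValleyMod {A : Type} (step sim : A → A → Prop) (a b : A) : Prop :=
  ∃ c d, Relation.ReflTransGen step a c ∧ sim c d ∧ Relation.ReflTransGen step b d

/-- Church–Rosser modulo `sim`: every conversion is a valley modulo `sim`. -/
def ChurchRosserModulo {A : Type} (step sim : A → A → Prop) : Prop :=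
  ∀ a b, Conv step sim a b → ValleyMod step sim a b


lemma Conv.symm' {A : Type} {step sim : A → A → Prop} (hsim : Equivalence sim)
    {a b : A} (hab : Conv step sim a b) : Conv step sim b a := by
  induction hab with
  | refl => exact Relation.ReflTransGen.refl
  | tail _ hstep ih =>
    refine Relation.ReflTransGen.head ?_ ih
    rcases hstep with h1 | h1 | h1
    · exact Or.inr (Or.inl h1)
    · exact Or.inl h1
    · exact Or.inr (Or.inr (hsim.symm h1))

/-- Lemma 2.3 (Avenhaus): if `→ ⊆ ⇀ ⊆ ∼·→·∼` and `⇀` is Church–Rosser modulo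
`∼`, then `→/∼ = ∼·→·∼` is Church–Rosser modulo `∼`. -/
theorem stmt0 {A : Type} (r h sim : A → A → Prop) (hsim : Equivalence sim)
    (hrh : ∀ a b, r a b → h a b)
    (hhr : ∀ a b, h a b → ∃ c d, sim a c ∧ r c d ∧ sim d b)
    (hCR : ChurchRosserModulo h sim) :
    ChurchRosserModulo (fun a b => ∃ c d, sim a c ∧ r c d ∧ sim d b) sim := by
  intro a b hab
  set q := fun a b => ∃ c d, sim a c ∧ r c d ∧ sim d b with hq
  -- Conv q sim ⊆ Conv h sim
  have step_to_conv : ∀ x y, q x y → Conv h sim x y := by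
    rintro x y ⟨c, d, hxc, hcd, hdy⟩
    exact Relation.ReflTransGen.head (Or.inr (Or.inr hxc))
      (Relation.ReflTransGen.head (Or.inl (hrh _ _ hcd))
        (Relation.ReflTransGen.single (Or.inr (Or.inr hdy))))
  have hconv : Conv h sim a b := by
    induction hab with
    | refl => exact Relation.ReflTransGen.refl
    | tail _ hstep ih =>
      refine ih.trans ?_
      rcases hstep with hs | hs | hs
      · exact step_to_conv _ _ hs
      · exact Conv.symm' hsim (step_to_conv _ _ hs)
      · exact Relation.ReflTransGen.single (Or.inr (Or.inr hs))
  obtain ⟨c, d, hac, hcd, hbd⟩ := hCR a b hconv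
  have hmono : ∀ x y, Relation.ReflTransGen h x y → Relation.ReflTransGen q x y := by
    intro x y hxy
    refine Relation.ReflTransGen.mono ?_ x y hxy
    intro u v huv
    obtain ⟨c', d', h1, h2, h3⟩ := hhr _ _ huv
    exact ⟨c', d', h1, h2, h3⟩
  exact ⟨c, d, hmono _ _ hac, hcd, hmono _ _ hbd⟩
end

section
/- Let ⟨A,→1⟩ and ⟨A,→2⟩ be ARSs over the same set and ∼ an equivalence relation on A. If →1 and →2 are normalization equivalent modulo ∼ (i.e., →1^! · ∼ = →2^! · ∼) and both are terminating, then they are conversion equivalent modulo ∼ (i.e., the equivalence closures of →1 ∪ ∼ and →2 ∪ ∼ coincide). -/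
private lemma nf_exists {A : Type} (r : A → A → Prop)
    (hw : WellFounded (fun a b => r b a)) (a : A) :
    ∃ c, Relation.ReflTransGen r a c ∧ NF r c := by
  induction a using hw.induction with
  | _ a ih =>
    by_cases h : ∃ b, r a b
    · obtain ⟨b, hb⟩ := h
      obtain ⟨c, hc, hnf⟩ := ih b hb
      exact ⟨c, Relation.ReflTransGen.head hb hc, hnf⟩
    · exact ⟨a, Relation.ReflTransGen.refl, fun b hb => h ⟨b, hb⟩⟩

private lemma conv_symm {A : Type} {step sim : A → A → Prop} (hs : ∀ a b, sim a b → sim b a)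
    {a b : A} (h : Conv step sim a b) : Conv step sim b a := by
  induction h with
  | refl => exact Relation.ReflTransGen.refl
  | tail hbc hcd ih =>
    refine Relation.ReflTransGen.head ?_ ih
    rcases hcd with h | h | h
    · exact Or.inr (Or.inl h)
    · exact Or.inl h
    · exact Or.inr (Or.inr (hs _ _ h))

private lemma conv_of_rtg {A : Type} {step sim : A → A → Prop} {a b : A}
    (h : Relation.ReflTransGen step a b) : Conv step sim a b :=
  Relation.ReflTransGen.mono (fun _ _ h => Or.inl h) a b h

/-- Key lemma: one direction of the transfer. -/
private lemma conv_mono {A : Type} (r1 r2 sim : A → A → Prop) (hsim : Equivalence sim)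
    (hne : ∀ a b,
      (∃ c, Relation.ReflTransGen r1 a c ∧ NF r1 c ∧ sim c b) →
      (∃ c, Relation.ReflTransGen r2 a c ∧ NF r2 c ∧ sim c b))
    (hterm1 : WellFounded (fun a b => r1 b a)) :
    ∀ a b, Conv r1 sim a b → Conv r2 sim a b := by
  have key : ∀ a c, Relation.ReflTransGen r1 a c → NF r1 c → Conv r2 sim a c := by
    intro a c hac hnf
    obtain ⟨c2, h2, hnf2, hs2⟩ := hne a c ⟨c, hac, hnf, hsim.refl c⟩
    exact Relation.ReflTransGen.tail (conv_of_rtg h2) (Or.inr (Or.inr hs2))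
  have step : ∀ a b, r1 a b → Conv r2 sim a b := by
    intro a b hab
    obtain ⟨c, hbc, hnf⟩ := nf_exists r1 hterm1 b
    have hac : Relation.ReflTransGen r1 a c := Relation.ReflTransGen.head hab hbc
    exact (key a c hac hnf).trans (conv_symm (fun _ _ => hsim.symm) (key b c hbc hnf))
  intro a b h
  induction h with
  | refl => exact Relation.ReflTransGen.refl
  | tail hbc hcd ih =>
    refine ih.trans ?_
    rcases hcd with h | h | h
    · exact step _ _ h
    · exact conv_symm (fun _ _ => hsim.symm) (step _ _ h)
    · exact Relation.ReflTransGen.single (Or.inr (Or.inr h))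

/-- Normalization equivalence modulo `∼` of terminating ARSs implies
conversion equivalence modulo `∼`. -/
theorem stmt7 {A : Type} (r1 r2 sim : A → A → Prop) (hsim : Equivalence sim)
    (hne : ∀ a b,
      (∃ c, Relation.ReflTransGen r1 a c ∧ NF r1 c ∧ sim c b) ↔
      (∃ c, Relation.ReflTransGen r2 a c ∧ NF r2 c ∧ sim c b))
    (hterm1 : WellFounded (fun a b => r1 b a))
    (hterm2 : WellFounded (fun a b => r2 b a)) :
    ∀ a b, Conv r1 sim a b ↔ Conv r2 sim a b := by
  intro a b
  constructor
  · exact conv_mono r1 r2 sim hsim (fun a b => (hne a b).mp) hterm1 a b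
  · exact conv_mono r2 r1 sim hsim (fun a b => (hne a b).mpr) hterm2 a b
end
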